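/- arXiv:1202.3621 — 2 statements merged into one kernel-verified Lean document; each statement's English description precedes it below -/
import Mathlib

section
/- Let v be a kinetic order for the network N. Then the following are equivalent: (i) N is injective over K_g(N)[v], i.e., for every rate vector κ and every pair of distinct vectors a, b ∈ ℝ^n_{>0} with a − b ∈ Γ one has f_{κ,v}(a) ≠ f_{κ,v}(b); (ii) det(J_c(f̃_{κ,v})) ≠ 0 for all c ∈ ℝ^n_{>0} and all rate vectors κ ∈ ℝ^m_{>0}. -/
noncomputable section

namespace CRN

variable {n m : ℕ}

/-- The orthogonal complement of a subspace of `Fin n → ℝ` with respect to the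
standard scalar product. -/
def orthComp (F : Submodule ℝ (Fin n → ℝ)) : Submodule ℝ (Fin n → ℝ) where
  carrier := {w | ∀ v ∈ F, ∑ i, w i * v i = 0}
  add_mem' := by
    intro a b ha hb v hv
    have h1 := ha v hv
    have h2 := hb v hv
    have key : ∀ i, (a + b) i * v i = a i * v i + b i * v i := fun i => by
      simp [add_mul]
    calc ∑ i, (a + b) i * v i
        = ∑ i, (a i * v i + b i * v i) := Finset.sum_congr rfl (fun i _ => key i)
      _ = (∑ i, a i * v i) + ∑ i, b i * v i := Finset.sum_add_distrib
      _ = 0 := by rw [h1, h2, add_zero]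
  zero_mem' := by
    intro v hv
    simp
  smul_mem' := by
    intro t a ha v hv
    have h1 := ha v hv
    simp only [Set.mem_setOf_eq, Pi.smul_apply, smul_eq_mul]
    calc ∑ i, t * a i * v i
        = t * ∑ i, a i * v i := by
          rw [Finset.mul_sum]
          exact Finset.sum_congr rfl fun i _ => (mul_assoc _ _ _)
      _ = 0 := by rw [h1, mul_zero]

/-- `ω` is a reduced basis of `F^⊥`: it is a basis of the orthogonal complement of `F`,
`ω i` has `i`-th coordinate `1`, and `j`-th coordinate `0` for every `j < d`, `j ≠ i`. -/
def IsReducedBasis (d : ℕ) (F : Submodule ℝ (Fin n → ℝ)) (ω : Fin d → Fin n → ℝ) : Prop :=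
  (∀ i, ω i ∈ orthComp F) ∧
  Submodule.span ℝ (Set.range ω) = orthComp F ∧
  LinearIndependent ℝ ω ∧
  (∀ (i : Fin d) (j : Fin n), (j : ℕ) = (i : ℕ) → ω i j = 1) ∧
  (∀ (i : Fin d) (j : Fin n), (j : ℕ) < d → (j : ℕ) ≠ (i : ℕ) → ω i j = 0)

/-- The matrix whose top `d` rows are `ω` and whose remaining rows agree with `M`. -/
def tildeMat (d : ℕ) (ω : Fin d → Fin n → ℝ) (M : Matrix (Fin n) (Fin n) ℝ) :
    Matrix (Fin n) (Fin n) ℝ :=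
  Matrix.of fun i j => if h : (i : ℕ) < d then ω ⟨(i : ℕ), h⟩ j else M i j

/-- The stoichiometric matrix: `r`-th column is `y' r - y r`. -/
def stoich (y y' : Fin m → Fin n → ℝ) : Matrix (Fin n) (Fin m) ℝ :=
  Matrix.of fun i r => y' r i - y r i

/-- The stoichiometric subspace: the span of the reaction vectors `y' r - y r`. -/
def stoichSpan (y y' : Fin m → Fin n → ℝ) : Submodule ℝ (Fin n → ℝ) :=
  Submodule.span ℝ (Set.range fun r => (fun i => y' r i - y r i))

/-- The matrix whose `r`-th row is the kinetic-order vector `v r`. -/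
def Zmat (v : Fin m → Fin n → ℝ) : Matrix (Fin m) (Fin n) ℝ :=
  Matrix.of fun r i => v r i

/-- The Jacobian matrix of `f` at `c`. -/
def jac (f : (Fin n → ℝ) → Fin n → ℝ) (c : Fin n → ℝ) : Matrix (Fin n) (Fin n) ℝ :=
  Matrix.of fun i j => fderiv ℝ (fun x => f x i) c (Pi.single j 1)

/-- The species formation rate function of a kinetics `K`. -/
def specForm (y y' : Fin m → Fin n → ℝ) (K : Fin m → (Fin n → ℝ) → ℝ) (c : Fin n → ℝ) :
    Fin n → ℝ :=
  fun i => ∑ r, K r c * (y' r i - y r i)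

/-- The power-law rate functions with rate vector `κ` and kinetic order `v`. -/
def powerLaw (κ : Fin m → ℝ) (v : Fin m → Fin n → ℝ) : Fin m → (Fin n → ℝ) → ℝ :=
  fun r c => κ r * ∏ j, c j ^ v r j

/-- The power-law species formation rate function. -/
def plf (y y' : Fin m → Fin n → ℝ) (κ : Fin m → ℝ) (v : Fin m → Fin n → ℝ) (c : Fin n → ℝ) :
    Fin n → ℝ :=
  fun i => ∑ r, κ r * (∏ j, c j ^ v r j) * (y' r i - y r i)

/-- The extended rate function associated with a reduced basis `ω` and `f`. -/
def tildeF (d : ℕ) (ω : Fin d → Fin n → ℝ) (f : (Fin n → ℝ) → Fin n → ℝ) (c : Fin n → ℝ) :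
    Fin n → ℝ :=
  fun i => if h : (i : ℕ) < d then ∑ j, ω ⟨(i : ℕ), h⟩ j * c j else f c i

/-- The extended rate function with the bottom `s` components negated. -/
def hatF (d : ℕ) (ω : Fin d → Fin n → ℝ) (f : (Fin n → ℝ) → Fin n → ℝ) (c : Fin n → ℝ) :
    Fin n → ℝ :=
  fun i => if h : (i : ℕ) < d then ∑ j, ω ⟨(i : ℕ), h⟩ j * c j else -(f c i)

/-- Membership in the positive orthant. -/
def Pos (c : Fin n → ℝ) : Prop := ∀ i, 0 < c i

/-- The network is injective over the power-law kinetics with fixed kinetic order `v`. -/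
def InjOverPL (y y' : Fin m → Fin n → ℝ) (v : Fin m → Fin n → ℝ) : Prop :=
  ∀ κ : Fin m → ℝ, (∀ r, 0 < κ r) → ∀ a b : Fin n → ℝ, Pos a → Pos b → a ≠ b →
    a - b ∈ stoichSpan y y' → plf y y' κ v a ≠ plf y y' κ v b

/-- An influence specification takes values in `{-1, 0, 1}`. -/
def IsInfluence (I : Fin m → Fin n → ℝ) : Prop := ∀ r i, I r i = -1 ∨ I r i = 0 ∨ I r i = 1

/-- The influence specification associated with a kinetic order `v`. -/
def infOf (v : Fin m → Fin n → ℝ) : Fin m → Fin n → ℝ := fun r i => Real.sign (v r i)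

/-- `v ∈ Σ(I)`: the kinetic order `v` has associated influence specification `I`. -/
def InSigma (I : Fin m → Fin n → ℝ) (v : Fin m → Fin n → ℝ) : Prop :=
  ∀ r i, Real.sign (v r i) = I r i

/-- The partial order `I' ≼ I` on influence specifications. -/
def Preceq (I' I : Fin m → Fin n → ℝ) : Prop :=
  ∀ r i, (I' r i = 1 → I r i = 1) ∧ (I' r i = -1 → I r i = -1)

/-- The matrix `M̃(v)`: top `d` rows `ω`, bottom rows from `A ⬝ Z(v)`. -/
def Mt (y y' : Fin m → Fin n → ℝ) (d : ℕ) (ω : Fin d → Fin n → ℝ)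
    (v : Fin m → Fin n → ℝ) : Matrix (Fin n) (Fin n) ℝ :=
  tildeMat d ω (stoich y y' * Zmat v)

/-- The influence specification `I` has a signed determinant. -/
def SignedDet (y y' : Fin m → Fin n → ℝ) (d : ℕ) (ω : Fin d → Fin n → ℝ)
    (I : Fin m → Fin n → ℝ) : Prop :=
  ∀ v w, InSigma I v → InSigma I w →
    Real.sign (Mt y y' d ω v).det = Real.sign (Mt y y' d ω w).det

/-- The influence specification `I` is sign-nonsingular (SNS). -/
def IsSNS (y y' : Fin m → Fin n → ℝ) (d : ℕ) (ω : Fin d → Fin n → ℝ)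
    (I : Fin m → Fin n → ℝ) : Prop :=
  SignedDet y y' d ω I ∧ ∀ v, InSigma I v → (Mt y y' d ω v).det ≠ 0

/-- `Ω` is an admissible kinetics domain: `ℝ^n_{>0} ⊆ Ω ⊆ ℝ^n_{≥0}`. -/
def KinDom (Ω : Set (Fin n → ℝ)) : Prop :=
  {c : Fin n → ℝ | ∀ i, 0 < c i} ⊆ Ω ∧ Ω ⊆ {c : Fin n → ℝ | ∀ i, 0 ≤ c i}

/-- The rate functions are nonnegative on the domain. -/
def KinNonneg (Ω : Set (Fin n → ℝ)) (K : Fin m → (Fin n → ℝ) → ℝ) : Prop :=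
  ∀ r, ∀ c ∈ Ω, 0 ≤ K r c

/-- `I_r^+ ⊆ supp c`. -/
def PosSupp (I : Fin m → Fin n → ℝ) (r : Fin m) (c : Fin n → ℝ) : Prop :=
  ∀ i, I r i = 1 → c i ≠ 0

/-- The kinetics `K` respects the influence specification `I`. -/
def Respects (Ω : Set (Fin n → ℝ)) (K : Fin m → (Fin n → ℝ) → ℝ)
    (I : Fin m → Fin n → ℝ) : Prop :=
  ∀ c ∈ Ω, ∀ r, (0 < K r c ↔ PosSupp I r c)

/-- The kinetics `K` is strictly monotonic with respect to `I`. -/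
def StrictlyMonotonic (Ω : Set (Fin n → ℝ)) (K : Fin m → (Fin n → ℝ) → ℝ)
    (I : Fin m → Fin n → ℝ) : Prop :=
  Respects Ω K I ∧
  ∀ (r : Fin m) (c d : Fin n → ℝ), c ∈ Ω → d ∈ Ω → PosSupp I r c → PosSupp I r d →
    ∀ i, (∀ j, j ≠ i → c j = d j) →
      ((I r i = 1 → c i < d i → K r c < K r d) ∧
       (I r i = -1 → c i < d i → K r d < K r c) ∧
       (I r i = 0 → K r c = K r d))

/-- The kinetics `K` is differentiable with respect to `I`. -/
def DiffWrt (Ω : Set (Fin n → ℝ)) (K : Fin m → (Fin n → ℝ) → ℝ)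
    (I : Fin m → Fin n → ℝ) : Prop :=
  Respects Ω K I ∧
  (∀ r, ∀ c ∈ Ω, ContinuousWithinAt (K r) Ω c) ∧
  (∀ (r : Fin m) (c : Fin n → ℝ), (∀ i, 0 < c i) → DifferentiableAt ℝ (K r) c) ∧
  (∀ (r : Fin m) (c : Fin n → ℝ), (∀ i, 0 < c i) → ∀ i,
     Real.sign (fderiv ℝ (K r) c (Pi.single i 1)) = I r i)

/-- `a` and `b` are non-overlapping with respect to `I`. -/
def NonOverlap (I : Fin m → Fin n → ℝ) (a b : Fin n → ℝ) : Prop :=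
  ∀ r, ¬ PosSupp I r a → PosSupp I r b

/-- The kinetics `K` is weakly monotonic with respect to `I`. -/
def WeaklyMonotonic (y : Fin m → Fin n → ℝ) (Ω : Set (Fin n → ℝ))
    (K : Fin m → (Fin n → ℝ) → ℝ) (I : Fin m → Fin n → ℝ) : Prop :=
  ∀ a ∈ Ω, ∀ b ∈ Ω, NonOverlap I a b → ∀ r,
    (K r b < K r a → ∃ i, Real.sign (a i - b i) = I r i ∧ I r i ≠ 0) ∧
    (K r a = K r b →
      ((∀ i, y r i ≠ 0 → a i = b i) ∨
        ∃ i j, i ≠ j ∧ Real.sign (a i - b i) = I r i ∧ I r i ≠ 0 ∧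
          Real.sign (a j - b j) = -(I r j) ∧ I r j ≠ 0))

/-- A square real matrix is a P-matrix: all principal minors are positive. -/
def IsPMatrix {N : ℕ} (M : Matrix (Fin N) (Fin N) ℝ) : Prop :=
  ∀ J : Finset (Fin N),
    0 < (M.submatrix (fun i : {x // x ∈ J} => (i : Fin N))
          (fun j : {x // x ∈ J} => (j : Fin N))).det

/-- The minor `det(A_{J,C})` of the stoichiometric matrix. -/
def subDetA (y y' : Fin m → Fin n → ℝ) (s : ℕ) (J : Finset (Fin n)) (C : Finset (Fin m))
    (hJ : J.card = s) (hC : C.card = s) : ℝ :=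
  ((stoich y y').submatrix (fun a => (J.orderIsoOfFin hJ a).1)
    (fun b => (C.orderIsoOfFin hC b).1)).det

/-- The minor `det(Z(v)_{C,J})`. -/
def subDetZ (v : Fin m → Fin n → ℝ) (s : ℕ) (C : Finset (Fin m)) (J : Finset (Fin n))
    (hC : C.card = s) (hJ : J.card = s) : ℝ :=
  ((Zmat v).submatrix (fun a => (C.orderIsoOfFin hC a).1)
    (fun b => (J.orderIsoOfFin hJ b).1)).det

/-- The Hill-type species formation rate function. -/
def hillf (y y' : Fin m → Fin n → ℝ) (κ : Fin m → ℝ) (δ v : Fin m → Fin n → ℝ)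
    (c : Fin n → ℝ) : Fin n → ℝ :=
  fun i => ∑ r, κ r * (∏ j, (c j ^ v r j) / (δ r j + c j ^ v r j)) * (y' r i - y r i)


/-!
For positive `a, b` put `μ = log a - log b` and `g t = (eᵗ - 1) / t > 0`. Then
`a ^ v_r - b ^ v_r = b ^ v_r · g (v_r · μ) · (v_r · μ)`, so `f_κ(a) - f_κ(b) = A (k ⊙ Z(v) μ)`
for a positive vector `k` (`⊙` the coordinatewise product), while the Jacobian gives
`J_c(f_κ) x = A (K(c) ⊙ Z(v) (x / c))`. The two shapes are matched by the logarithmic mean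
`c = b · g(μ)`, for which `a - b = c ⊙ μ`, together with a rescaling of the rate constants, which
is harmless since `κ` ranges over all positive vectors. Because the basis `ω` is reduced,
`J_c(f̃_κ) x = 0` says exactly that `x ∈ Γ` and `J_c(f_κ) x = 0`.
-/

open Matrix Real

def expSlope (t : ℝ) : ℝ := if t = 0 then 1 else (exp t - 1) / t

theorem expSlope_pos (t : ℝ) : 0 < expSlope t := by
  unfold expSlope
  split_ifs with ht
  · exact one_pos
  · rcases lt_or_gt_of_ne ht with ht | ht
    · exact div_pos_of_neg_of_neg (sub_neg.2 (exp_lt_one_iff.2 ht)) ht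
    · exact div_pos (sub_pos.2 (one_lt_exp_iff.2 ht)) ht

theorem mul_expSlope (t : ℝ) : t * expSlope t = exp t - 1 := by
  unfold expSlope
  split_ifs with ht
  · simp [ht]
  · field_simp

theorem mul_exp_sub_self (b t : ℝ) : b * exp t - b = b * expSlope t * t := by
  rw [mul_assoc, mul_comm (expSlope t), mul_expSlope]
  ring

theorem prod_rpow_pos {ι : Type*} [Fintype ι] {c : ι → ℝ} (hc : ∀ i, 0 < c i) (p : ι → ℝ) :
    0 < ∏ i, c i ^ p i :=
  Finset.prod_pos fun i _ => rpow_pos_of_pos (hc i) _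

theorem hasFDerivAt_prod_rpow {ι : Type*} [Fintype ι] [DecidableEq ι] (p : ι → ℝ) {c : ι → ℝ}
    (hc : ∀ i, 0 < c i) :
    HasFDerivAt (fun z : ι → ℝ => ∏ i, z i ^ p i)
      ((∏ i, c i ^ p i) •
        ∑ i, (p i / c i) • ContinuousLinearMap.proj (R := ℝ) (φ := fun _ : ι => ℝ) i) c := by
  have h := HasFDerivAt.finsetProd (u := Finset.univ) (x := c) fun i _ =>
    (hasFDerivAt_apply (𝕜 := ℝ) i c).rpow_const (p := p i) (Or.inl (hc i).ne')
  refine h.congr_fderiv ?_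
  ext x
  simp only [FunLike.coe_sum, FunLike.coe_smul, Finset.sum_apply, Pi.smul_apply, smul_eq_mul,
    Finset.smul_sum, ContinuousLinearMap.proj_apply]
  refine Finset.sum_congr rfl fun i _ => ?_
  rw [← Finset.prod_erase_mul _ _ (Finset.mem_univ i), rpow_sub_one (hc i).ne']
  field_simp

theorem fderiv_sum_mul_apply_single {ι : Type*} [Fintype ι] [DecidableEq ι] (w c : ι → ℝ)
    (j : ι) : fderiv ℝ (fun z : ι → ℝ => ∑ l, w l * z l) c (Pi.single j 1) = w j := by
  have h := HasFDerivAt.fun_sum (u := Finset.univ) (x := c) fun l _ =>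
    (hasFDerivAt_apply (𝕜 := ℝ) l c).const_mul (w l)
  rw [h.fderiv]
  simp [Pi.single_apply]

theorem orthComp_eq_orthogonal (F : Submodule ℝ (Fin n → ℝ)) :
    orthComp F = LinearMap.BilinForm.orthogonal (dotProductBilin ℝ ℝ) F := by
  ext w
  rw [LinearMap.BilinForm.mem_orthogonal_iff]
  refine forall₂_congr fun v _ => ?_
  simp [dotProduct, mul_comm]

theorem orthComp_orthComp (F : Submodule ℝ (Fin n → ℝ)) : orthComp (orthComp F) = F := by
  have hsymm : ∀ x y : Fin n → ℝ, dotProductBilin ℝ ℝ x y = dotProductBilin ℝ ℝ y x :=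
    fun x y => dotProduct_comm x y
  have hnd : (dotProductBilin ℝ ℝ : LinearMap.BilinForm ℝ (Fin n → ℝ)).Nondegenerate :=
    ⟨fun x hx => dotProduct_eq_zero x hx,
      fun x hx => dotProduct_eq_zero x fun y => (hsymm x y).trans (hx y)⟩
  rw [orthComp_eq_orthogonal, orthComp_eq_orthogonal]
  exact LinearMap.BilinForm.orthogonal_orthogonal hnd (fun x y h => (hsymm y x).trans h) F

namespace IsReducedBasis

variable {d : ℕ} {F : Submodule ℝ (Fin n → ℝ)} {ω : Fin d → Fin n → ℝ}

theorem card_le (hω : IsReducedBasis d F ω) : d ≤ n := by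
  simpa using hω.2.2.1.fintype_card_le_finrank

theorem mem_of_forall_sum_mul_eq_zero (hω : IsReducedBasis d F ω) {x : Fin n → ℝ}
    (hx : ∀ i, ∑ j, ω i j * x j = 0) : x ∈ F := by
  rw [← orthComp_orthComp F, ← hω.2.1]
  intro w hw
  induction hw using Submodule.span_induction with
  | mem u hu =>
    obtain ⟨i, rfl⟩ := hu
    simpa only [mul_comm] using hx i
  | zero => simp
  | add u w _ _ hu hw => simp [mul_add, Finset.sum_add_distrib, hu, hw]
  | smul t u _ hu => simp [mul_left_comm _ t, ← Finset.mul_sum, hu]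

theorem eq_zero_of_mem (hω : IsReducedBasis d F ω) {w : Fin n → ℝ} (hwF : w ∈ F)
    (hw : ∀ i : Fin n, d ≤ i → w i = 0) : w = 0 := by
  funext i
  by_cases hi : (i : ℕ) < d
  · have hsum : ∑ j, ω ⟨i, hi⟩ j * w j = w i := by
      rw [Finset.sum_eq_single i _ (by simp), hω.2.2.2.1 ⟨i, hi⟩ i rfl, one_mul]
      intro j _ hji
      by_cases hj : (j : ℕ) < d
      · rw [hω.2.2.2.2 ⟨i, hi⟩ j hj (Fin.val_ne_of_ne hji), zero_mul]
      · rw [hw j (not_lt.1 hj), mul_zero]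
    rw [← hsum]
    exact hω.1 ⟨i, hi⟩ w hwF
  · exact hw i (not_lt.1 hi)

theorem tildeF_const_eq_zero_iff (hω : IsReducedBasis d F ω) {w : Fin n → ℝ} (hwF : w ∈ F)
    (x : Fin n → ℝ) : tildeF d ω (fun _ => w) x = 0 ↔ x ∈ F ∧ w = 0 := by
  constructor
  · intro h
    refine ⟨hω.mem_of_forall_sum_mul_eq_zero fun i => ?_, hω.eq_zero_of_mem hwF fun i hi => ?_⟩
    · simpa [tildeF] using congrFun h ⟨i, i.2.trans_le hω.card_le⟩
    · simpa [tildeF, not_lt.2 hi] using congrFun h i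
  · rintro ⟨hx, rfl⟩
    funext i
    by_cases hi : (i : ℕ) < d
    · simpa [tildeF, hi] using hω.1 ⟨i, hi⟩ x hx
    · simp [tildeF, hi]

end IsReducedBasis

theorem mulVec_mem_stoichSpan (y y' : Fin m → Fin n → ℝ) (t : Fin m → ℝ) :
    stoich y y' *ᵥ t ∈ stoichSpan y y' := by
  have h : stoichSpan y y' = LinearMap.range (stoich y y').mulVecLin := by
    rw [range_mulVecLin]
    rfl
  exact h ▸ ⟨t, rfl⟩

theorem powerLaw_pos {κ : Fin m → ℝ} {c : Fin n → ℝ} (hκ : ∀ r, 0 < κ r) (hc : ∀ j, 0 < c j)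
    (v : Fin m → Fin n → ℝ) (r : Fin m) : 0 < powerLaw κ v r c :=
  mul_pos (hκ r) (prod_rpow_pos hc (v r))

theorem plf_eq_mulVec (y y' : Fin m → Fin n → ℝ) (κ : Fin m → ℝ) (v : Fin m → Fin n → ℝ)
    (c : Fin n → ℝ) : plf y y' κ v c = stoich y y' *ᵥ fun r => powerLaw κ v r c := by
  funext i
  exact Finset.sum_congr rfl fun r _ => mul_comm _ _

theorem powerLaw_sub_powerLaw {a b : Fin n → ℝ} (ha : ∀ j, 0 < a j) (hb : ∀ j, 0 < b j)
    (κ : Fin m → ℝ) (v : Fin m → Fin n → ℝ) (r : Fin m) :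
    powerLaw κ v r a - powerLaw κ v r b =
      powerLaw κ v r b * expSlope ((Zmat v *ᵥ fun j => log (a j) - log (b j)) r) *
        (Zmat v *ᵥ fun j => log (a j) - log (b j)) r := by
  have hpow : ∀ j, a j ^ v r j = b j ^ v r j * exp (v r j * (log (a j) - log (b j))) := by
    intro j
    rw [rpow_def_of_pos (ha j), rpow_def_of_pos (hb j), ← exp_add]
    ring_nf
  have hprod : powerLaw κ v r a =
      powerLaw κ v r b * exp ((Zmat v *ᵥ fun j => log (a j) - log (b j)) r) := by
    simp only [powerLaw, hpow, Finset.prod_mul_distrib, ← exp_sum, mul_assoc]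
    rfl
  rw [hprod, mul_exp_sub_self]

theorem plf_sub_plf {a b : Fin n → ℝ} (ha : ∀ j, 0 < a j) (hb : ∀ j, 0 < b j)
    (y y' : Fin m → Fin n → ℝ) (κ : Fin m → ℝ) (v : Fin m → Fin n → ℝ) :
    plf y y' κ v a - plf y y' κ v b = stoich y y' *ᵥ fun r =>
      powerLaw κ v r b * expSlope ((Zmat v *ᵥ fun j => log (a j) - log (b j)) r) *
        (Zmat v *ᵥ fun j => log (a j) - log (b j)) r := by
  rw [plf_eq_mulVec, plf_eq_mulVec, ← mulVec_sub]
  congr 1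
  funext r
  exact powerLaw_sub_powerLaw ha hb κ v r

theorem fderiv_plf_apply_single {κ : Fin m → ℝ} {c : Fin n → ℝ} (y y' : Fin m → Fin n → ℝ)
    (v : Fin m → Fin n → ℝ) (hc : ∀ j, 0 < c j) (i j : Fin n) :
    fderiv ℝ (fun z => plf y y' κ v z i) c (Pi.single j 1) =
      ∑ r, (y' r i - y r i) * powerLaw κ v r c * v r j * (c j)⁻¹ := by
  have h : HasFDerivAt (fun z => plf y y' κ v z i) _ c :=
    HasFDerivAt.fun_sum (u := Finset.univ) fun r _ =>
      ((hasFDerivAt_prod_rpow (v r) hc).const_mul (κ r)).mul_const (y' r i - y r i)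
  rw [h.fderiv]
  simp only [FunLike.coe_sum, FunLike.coe_smul, Finset.sum_apply, Pi.smul_apply, smul_eq_mul,
    ContinuousLinearMap.proj_apply, Pi.single_apply, mul_ite, mul_one, mul_zero,
    Finset.sum_ite_eq', Finset.mem_univ, if_true, powerLaw]
  exact Finset.sum_congr rfl fun r _ => by ring

def plfJac (y y' : Fin m → Fin n → ℝ) (κ : Fin m → ℝ) (v : Fin m → Fin n → ℝ) (c : Fin n → ℝ) :
    Matrix (Fin n) (Fin n) ℝ :=
  stoich y y' * diagonal (fun r => powerLaw κ v r c) * Zmat v * diagonal (fun j => (c j)⁻¹)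

theorem plfJac_mulVec (y y' : Fin m → Fin n → ℝ) (κ : Fin m → ℝ) (v : Fin m → Fin n → ℝ)
    (c x : Fin n → ℝ) :
    plfJac y y' κ v c *ᵥ x = stoich y y' *ᵥ fun r => powerLaw κ v r c * (Zmat v *ᵥ (x / c)) r := by
  simp only [plfJac, Matrix.mul_assoc, ← mulVec_mulVec]
  congr 1
  funext r
  rw [mulVec_diagonal]
  congr 2
  funext j
  rw [mulVec_diagonal, div_eq_inv_mul]
  rfl

theorem jac_tildeF_plf {d : ℕ} (y y' : Fin m → Fin n → ℝ) (ω : Fin d → Fin n → ℝ)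
    (κ : Fin m → ℝ) (v : Fin m → Fin n → ℝ) {c : Fin n → ℝ} (hc : ∀ j, 0 < c j) :
    jac (tildeF d ω (plf y y' κ v)) c = tildeMat d ω (plfJac y y' κ v c) := by
  ext i j
  by_cases hi : (i : ℕ) < d
  · simp only [jac, tildeF, tildeMat, of_apply, hi, dif_pos, fderiv_sum_mul_apply_single]
  · simp only [jac, tildeF, tildeMat, of_apply, hi, dif_neg, not_false_eq_true,
      fderiv_plf_apply_single y y' v hc, plfJac]
    rw [mul_diagonal, mul_apply]
    simp [mul_diagonal, stoich, Zmat, Finset.sum_mul]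

theorem tildeMat_mulVec {d : ℕ} (ω : Fin d → Fin n → ℝ) (M : Matrix (Fin n) (Fin n) ℝ)
    (x : Fin n → ℝ) : tildeMat d ω M *ᵥ x = tildeF d ω (fun _ => M *ᵥ x) x := by
  funext i
  by_cases hi : (i : ℕ) < d <;> simp [tildeMat, tildeF, mulVec, dotProduct, hi]

theorem det_jac_tildeF_plf_eq_zero_iff {d : ℕ} {y y' : Fin m → Fin n → ℝ}
    {ω : Fin d → Fin n → ℝ} (hω : IsReducedBasis d (stoichSpan y y') ω) (κ : Fin m → ℝ)
    (v : Fin m → Fin n → ℝ) {c : Fin n → ℝ} (hc : ∀ j, 0 < c j) :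
    (jac (tildeF d ω (plf y y' κ v)) c).det = 0 ↔ ∃ x ∈ stoichSpan y y', x ≠ 0 ∧
      (stoich y y' *ᵥ fun r => powerLaw κ v r c * (Zmat v *ᵥ (x / c)) r) = 0 := by
  rw [jac_tildeF_plf y y' ω κ v hc, ← exists_mulVec_eq_zero_iff]
  refine exists_congr fun x => ?_
  rw [tildeMat_mulVec, plfJac_mulVec,
    hω.tildeF_const_eq_zero_iff (mulVec_mem_stoichSpan y y' _)]
  exact ⟨fun ⟨hx0, hx⟩ => ⟨hx.1, hx0, hx.2⟩, fun ⟨hxΓ, hx0, hx⟩ => ⟨hx0, hxΓ, hx⟩⟩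

theorem InjOverPL.det_jac_tildeF_plf_ne_zero {d : ℕ} {y y' : Fin m → Fin n → ℝ}
    {v : Fin m → Fin n → ℝ} (hinj : InjOverPL y y' v) {ω : Fin d → Fin n → ℝ}
    (hω : IsReducedBasis d (stoichSpan y y') ω) {c : Fin n → ℝ} (hc : ∀ j, 0 < c j)
    {κ : Fin m → ℝ} (hκ : ∀ r, 0 < κ r) :
    (jac (tildeF d ω (plf y y' κ v)) c).det ≠ 0 := by
  intro hdet
  obtain ⟨x, hxΓ, hx0, hker⟩ := (det_jac_tildeF_plf_eq_zero_iff hω κ v hc).1 hdet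
  set μ := x / c
  set b : Fin n → ℝ := fun j => c j / expSlope (μ j)
  set a : Fin n → ℝ := fun j => b j * exp (μ j)
  have hb : ∀ j, 0 < b j := fun j => div_pos (hc j) (expSlope_pos _)
  have ha : ∀ j, 0 < a j := fun j => mul_pos (hb j) (exp_pos _)
  have hlog : (fun j => log (a j) - log (b j)) = μ := by
    funext j
    rw [log_mul (hb j).ne' (exp_pos _).ne', log_exp, add_sub_cancel_left]
  have hab : a - b = x := by
    funext j
    have hcj : b j * expSlope (μ j) = c j := div_mul_cancel₀ _ (expSlope_pos _).ne'
    rw [Pi.sub_apply, mul_exp_sub_self, hcj]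
    exact mul_div_cancel₀ (x j) (hc j).ne'
  set κ' : Fin m → ℝ := fun r =>
    powerLaw κ v r c / ((∏ j, b j ^ v r j) * expSlope ((Zmat v *ᵥ μ) r))
  have hκ' : ∀ r, 0 < κ' r := fun r =>
    div_pos (powerLaw_pos hκ hc v r) (mul_pos (prod_rpow_pos hb (v r)) (expSlope_pos _))
  refine hinj κ' hκ' a b ha hb (fun h => hx0 (by rw [← hab, h, sub_self])) (hab ▸ hxΓ) ?_
  rw [← sub_eq_zero, plf_sub_plf ha hb, hlog, ← hker]
  congr 1
  funext r
  have hκ'r : κ' r * ((∏ j, b j ^ v r j) * expSlope ((Zmat v *ᵥ μ) r)) = powerLaw κ v r c :=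
    div_mul_cancel₀ _ (mul_pos (prod_rpow_pos hb (v r)) (expSlope_pos _)).ne'
  rw [← hκ'r, powerLaw]
  ring

theorem injOverPL_of_det_jac_tildeF_plf_ne_zero {d : ℕ} {y y' : Fin m → Fin n → ℝ}
    {ω : Fin d → Fin n → ℝ} (hω : IsReducedBasis d (stoichSpan y y') ω) {v : Fin m → Fin n → ℝ}
    (hdet : ∀ c : Fin n → ℝ, (∀ j, 0 < c j) → ∀ κ : Fin m → ℝ, (∀ r, 0 < κ r) →
      (jac (tildeF d ω (plf y y' κ v)) c).det ≠ 0) :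
    InjOverPL y y' v := by
  intro κ hκ a b ha hb hne hΓ heq
  set μ : Fin n → ℝ := fun j => log (a j) - log (b j)
  set c : Fin n → ℝ := fun j => b j * expSlope (μ j)
  have hc : ∀ j, 0 < c j := fun j => mul_pos (hb j) (expSlope_pos _)
  have hμ : (a - b) / c = μ := by
    funext j
    have ha' : a j = b j * exp (μ j) := by
      rw [exp_sub, exp_log (ha j), exp_log (hb j), mul_div_cancel₀ _ (hb j).ne']
    rw [Pi.div_apply, Pi.sub_apply, ha', mul_exp_sub_self, mul_div_cancel_left₀ _ (hc j).ne']
  set κ' : Fin m → ℝ := fun r =>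
    powerLaw κ v r b * expSlope ((Zmat v *ᵥ μ) r) / ∏ j, c j ^ v r j
  have hκ' : ∀ r, 0 < κ' r := fun r =>
    div_pos (mul_pos (powerLaw_pos hκ hb v r) (expSlope_pos _)) (prod_rpow_pos hc (v r))
  refine hdet c hc κ' hκ' ((det_jac_tildeF_plf_eq_zero_iff hω κ' v hc).2
    ⟨a - b, hΓ, sub_ne_zero.2 hne, ?_⟩)
  rw [hμ, ← sub_eq_zero.2 heq, plf_sub_plf ha hb]
  congr 1
  funext r
  have hκ'r : κ' r * ∏ j, c j ^ v r j = powerLaw κ v r b * expSlope ((Zmat v *ᵥ μ) r) :=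
    div_mul_cancel₀ _ (prod_rpow_pos hc (v r)).ne'
  rw [powerLaw, hκ'r]

theorem stmt3_general {n m : ℕ} (d : ℕ)
    (y y' : Fin m → Fin n → ℝ)
    (ω : Fin d → Fin n → ℝ)
    (hω : IsReducedBasis d (stoichSpan y y') ω)
    (v : Fin m → Fin n → ℝ) :
    InjOverPL y y' v ↔
      ∀ (c : Fin n → ℝ), (∀ i, 0 < c i) → ∀ κ : Fin m → ℝ, (∀ r, 0 < κ r) →
        (jac (tildeF d ω (plf y y' κ v)) c).det ≠ 0 :=
  ⟨fun hinj _ hc _ hκ => hinj.det_jac_tildeF_plf_ne_zero hω hc hκ,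
    injOverPL_of_det_jac_tildeF_plf_ne_zero hω⟩

/-- Theorem `injecclose-pl`. -/
theorem stmt3 {n m s : ℕ} (d : ℕ) (hd : d = n - s)
    (y y' : Fin m → Fin n → ℝ)
    (hs : Module.finrank ℝ (stoichSpan y y') = s)
    (ω : Fin d → Fin n → ℝ)
    (hω : IsReducedBasis d (stoichSpan y y') ω)
    (v : Fin m → Fin n → ℝ) :
    InjOverPL y y' v ↔
      ∀ (c : Fin n → ℝ), (∀ i, 0 < c i) → ∀ κ : Fin m → ℝ, (∀ r, 0 < κ r) →
        (jac (tildeF d ω (plf y y' κ v)) c).det ≠ 0 :=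
  stmt3_general d y y' ω hω v

end CRN
end
end

section
/- Let v be a kinetic order. For every c ∈ ℝ^n_{>0} and every rate vector κ, det(J_c(f̃_{κ,v})) = Σ_{C ⊆ {1,…,m}, #C = s} (∏_{l∈C} κ_l) · (∏_{i=1}^n c_i^{−1 + Σ_{l∈C} v_{l,i}}) · Σ_{J ⊆ {1,…,n}, #J = s} det(A_{J,C}) det(Z(v)_{C,J}) ∏_{j∉J} c_j. In particular, as a function of κ, det(J_c(f̃_{κ,v})) is a homogeneous polynomial of total degree s that is of degree at most one in each coordinate κ_r. -/
/-!
The Jacobian of `f̃` at `c` is `tildeMat d ω M` with `M = A · diag(κ_r c^{v_r}) · Z(v) · diag(c⁻¹)`.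
The rows of `ω` annihilate the columns of `A`, and `ω` is the identity on its first `d` columns,
so `M = P Q` with `P = [-Λ; 1]` and `Q` the last `s` rows of `M`; the Schur complement then gives
`det (tildeMat d ω M) = det (Q P)`, which by Cauchy–Binet is the sum of the principal `s × s` minors
of `M`. Expanding each minor `det (A_{J,·} diag(κ_r c^{v_r}) Z_{·,J})` by Cauchy–Binet once more
gives the formula, in which `κ` enters only through the squarefree monomials `∏_{l ∈ C} κ_l`.
-/

noncomputable section

namespace CRN

variable {n m : ℕ}

section CauchyBinet

open Finset Equiv

variable {R : Type*} [CommRing R] {ι : Type*} [Fintype ι] {s : ℕ}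

theorem det_mul_eq_sum_det_submatrix_mul_prod (M : Matrix (Fin s) ι R)
    (N : Matrix ι (Fin s) R) :
    (M * N).det = ∑ p : Fin s → ι, (M.submatrix id p).det * ∏ k, N (p k) k := by
  simp only [Matrix.det_apply', Matrix.mul_apply, prod_univ_sum, Fintype.piFinset_univ,
    mul_sum, sum_mul, Matrix.submatrix_apply, id, prod_mul_distrib]
  rw [sum_comm]
  simp only [mul_assoc]

variable [LinearOrder ι]

theorem filter_injective_image_eq_image_perm {J : Finset ι} (hJ : J.card = s) :
    ({p | Function.Injective p ∧ univ.image p = J} : Finset (Fin s → ι)) =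
      univ.image fun τ : Perm (Fin s) => J.orderEmbOfFin hJ ∘ τ := by
  ext p
  simp only [mem_filter, mem_univ, true_and, mem_image]
  constructor
  · rintro ⟨hp, rfl⟩
    have hmem : ∀ k, ∃ t, (univ.image p).orderEmbOfFin hJ t = p k := fun k => by
      rw [← Set.mem_range, range_orderEmbOfFin]; simp
    choose t ht using hmem
    have ht_inj : Function.Injective t := fun a b hab => hp (by rw [← ht, ← ht, hab])
    exact ⟨Equiv.ofBijective t (Finite.injective_iff_bijective.1 ht_inj), funext ht⟩
  · rintro ⟨τ, rfl⟩
    refine ⟨(J.orderEmbOfFin hJ).injective.comp τ.injective, ?_⟩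
    rw [← image_image, image_univ_equiv, image_orderEmbOfFin_univ]

theorem sum_injective_eq_sum_powersetCard_perm {β : Type*} [AddCommMonoid β]
    (G : (Fin s → ι) → β) :
    ∑ p : Fin s → ι with Function.Injective p, G p =
      ∑ J ∈ powersetCard s univ,
        if h : J.card = s then ∑ τ : Perm (Fin s), G (J.orderEmbOfFin h ∘ τ) else 0 := by
  rw [← sum_fiberwise_of_maps_to (g := fun p => univ.image p) (t := powersetCard s univ)]
  · refine sum_congr rfl fun J hJ => ?_
    have hs : J.card = s := (mem_powersetCard.1 hJ).2
    rw [dif_pos hs, filter_filter, filter_injective_image_eq_image_perm hs, sum_image]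
    intro τ _ τ' _ h
    exact Equiv.ext fun k => (J.orderEmbOfFin hs).injective (congrFun h k)
  · intro p hp
    simp only [mem_filter, mem_univ, true_and] at hp
    exact mem_powersetCard.2 ⟨subset_univ _, by rw [card_image_of_injective _ hp, card_fin]⟩

theorem det_mul_eq_sum_powersetCard (M : Matrix (Fin s) ι R) (N : Matrix ι (Fin s) R) :
    (M * N).det = ∑ J ∈ powersetCard s univ,
      if h : J.card = s then
        (M.submatrix id (J.orderEmbOfFin h)).det * (N.submatrix (J.orderEmbOfFin h) id).det
      else 0 := by
  have h_inj : ∀ p ∈ (univ : Finset (Fin s → ι)),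
      (M.submatrix id p).det * ∏ k, N (p k) k ≠ 0 → Function.Injective p := by
    intro p _ hp a b hab
    by_contra hne
    exact hp (by rw [Matrix.det_zero_of_column_eq hne fun k => by simp [hab], zero_mul])
  rw [det_mul_eq_sum_det_submatrix_mul_prod, ← sum_filter_of_ne h_inj,
    sum_injective_eq_sum_powersetCard_perm]
  refine sum_congr rfl fun J hJ => ?_
  have hs : J.card = s := (mem_powersetCard.1 hJ).2
  rw [dif_pos hs, dif_pos hs, Matrix.det_apply' (N.submatrix _ id), mul_sum]
  refine sum_congr rfl fun τ _ => ?_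
  rw [show M.submatrix id (J.orderEmbOfFin hs ∘ τ) =
    (M.submatrix id (J.orderEmbOfFin hs)).submatrix id τ from rfl, Matrix.det_permute']
  simp only [Matrix.submatrix_apply, id, Function.comp_apply]
  ring

end CauchyBinet

section TildeMat

open Matrix

variable {d s : ℕ}

/-- `[-Λ; 1]` with `Λ` the last `s` columns of `ω`: when `ω` starts with an identity block,
its columns span the kernel of `ω`. -/
def kernelMat (ω : Fin d → Fin (d + s) → ℝ) : Matrix (Fin (d + s)) (Fin s) ℝ :=
  (fromRows (-of fun i k => ω i (Fin.natAdd d k)) 1).submatrix finSumFinEquiv.symm id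

variable {ω : Fin d → Fin (d + s) → ℝ}

theorem det_tildeMat_eq_det_mul_kernelMat (hω : (of ω).submatrix id (Fin.castAdd s) = 1)
    (M : Matrix (Fin (d + s)) (Fin (d + s)) ℝ) :
    (tildeMat d ω M).det = (M.submatrix (Fin.natAdd d) id * kernelMat ω).det := by
  set Λ : Matrix (Fin d) (Fin s) ℝ := of fun i k => ω i (Fin.natAdd d k)
  set Q := M.submatrix (Fin.natAdd d) id
  have h_blocks : (tildeMat d ω M).submatrix finSumFinEquiv finSumFinEquiv =
      fromBlocks 1 Λ (Q.submatrix id (Fin.castAdd s)) (Q.submatrix id (Fin.natAdd d)) := by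
    ext (i | k) (j | k')
    · simpa [tildeMat] using congrFun (congrFun hω i) j
    · simp [tildeMat, Λ]
    · simp [tildeMat, Q]
    · simp [tildeMat, Q]
  have h_prod : Q * kernelMat ω =
      Q.submatrix id (Fin.natAdd d) - Q.submatrix id (Fin.castAdd s) * Λ := by
    rw [← submatrix_id_id (Q * kernelMat ω), ← submatrix_mul_equiv _ _ _ finSumFinEquiv]
    have hQ : Q.submatrix id finSumFinEquiv =
        fromCols (Q.submatrix id (Fin.castAdd s)) (Q.submatrix id (Fin.natAdd d)) := by
      ext k (j | j) <;> simp
    have hP : (kernelMat ω).submatrix finSumFinEquiv id = fromRows (-Λ) 1 := by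
      simp [kernelMat, Λ]
    rw [hQ, hP, fromCols_mul_fromRows, Matrix.mul_one, Matrix.mul_neg]
    abel
  rw [← det_submatrix_equiv_self finSumFinEquiv, h_blocks, det_fromBlocks_one₁₁, h_prod]

theorem eq_kernelMat_mul (hω : (of ω).submatrix id (Fin.castAdd s) = 1) {ι : Type*}
    {M : Matrix (Fin (d + s)) ι ℝ} (hM : of ω * M = 0) :
    M = kernelMat ω * M.submatrix (Fin.natAdd d) id := by
  ext i j
  induction i using Fin.addCases with
  | left a =>
    have h0 := congrFun (congrFun hM a) j
    have h1 : ∑ l : Fin d, of ω a (Fin.castAdd s l) * M (Fin.castAdd s l) j =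
        M (Fin.castAdd s a) j := by
      simp_rw [show ∀ l, of ω a (Fin.castAdd s l) = (1 : Matrix (Fin d) (Fin d) ℝ) a l from
        congrFun (congrFun hω a), Matrix.one_apply, ite_mul, one_mul, zero_mul,
        Finset.sum_ite_eq, if_pos (Finset.mem_univ _)]
    rw [Matrix.mul_apply, Fin.sum_univ_add, h1, Matrix.zero_apply, add_eq_zero_iff_eq_neg] at h0
    simpa [kernelMat, Matrix.mul_apply] using h0
  | right k => simp [kernelMat, Matrix.mul_apply, Matrix.one_apply]

theorem det_tildeMat_eq_sum_det_principal_submatrix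
    (hω : (of ω).submatrix id (Fin.castAdd s) = 1) {M : Matrix (Fin (d + s)) (Fin (d + s)) ℝ}
    (hM : of ω * M = 0) :
    (tildeMat d ω M).det = ∑ J ∈ Finset.powersetCard s Finset.univ,
      if h : J.card = s then (M.submatrix (J.orderEmbOfFin h) (J.orderEmbOfFin h)).det else 0 := by
  rw [det_tildeMat_eq_det_mul_kernelMat hω, det_mul_eq_sum_powersetCard]
  refine Finset.sum_congr rfl fun J hJ => ?_
  have hs : J.card = s := (Finset.mem_powersetCard.1 hJ).2
  rw [dif_pos hs, dif_pos hs, mul_comm]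
  conv_rhs => rw [eq_kernelMat_mul hω hM, submatrix_mul _ _ _ id _ Function.bijective_id, det_mul]

end TildeMat

section Jacobian

open Matrix

theorem jac_tildeF (d : ℕ) (ω : Fin d → Fin n → ℝ) (f : (Fin n → ℝ) → Fin n → ℝ)
    (c : Fin n → ℝ) : jac (tildeF d ω f) c = tildeMat d ω (jac f c) := by
  ext i j
  by_cases h : (i : ℕ) < d
  · have hlin : HasFDerivAt (fun x : Fin n → ℝ => ∑ k, ω ⟨i, h⟩ k * x k)
        (∑ k, ω ⟨i, h⟩ k • (ContinuousLinearMap.proj k : (Fin n → ℝ) →L[ℝ] ℝ)) c :=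
      HasFDerivAt.fun_sum fun k _ => (hasFDerivAt_apply k c).const_mul _
    simp [jac, tildeF, tildeMat, h, hlin.fderiv, Pi.single_apply]
  · simp [jac, tildeF, tildeMat, h]

theorem hasFDerivAt_prod_rpow_s4 (a : Fin n → ℝ) {c : Fin n → ℝ} (hc : ∀ i, 0 < c i) :
    HasFDerivAt (fun x : Fin n → ℝ => ∏ k, x k ^ a k)
      (∑ k, ((∏ l, c l ^ a l) * a k * (c k)⁻¹) •
        (ContinuousLinearMap.proj k : (Fin n → ℝ) →L[ℝ] ℝ)) c := by
  refine (HasFDerivAt.finsetProd fun k _ =>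
    (hasFDerivAt_apply k c).rpow_const (p := a k) (Or.inl (hc k).ne')).congr_fderiv
      (Finset.sum_congr rfl fun k _ => ?_)
  rw [smul_smul, ← Finset.prod_erase_mul _ _ (Finset.mem_univ k), Real.rpow_sub_one (hc k).ne']
  congr 1
  field_simp

theorem jac_plf (y y' : Fin m → Fin n → ℝ) (κ : Fin m → ℝ) (v : Fin m → Fin n → ℝ)
    {c : Fin n → ℝ} (hc : ∀ i, 0 < c i) :
    jac (plf y y' κ v) c = stoich y y' * diagonal (fun r => κ r * ∏ j, c j ^ v r j) * Zmat v *
      diagonal (fun j => (c j)⁻¹) := by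
  ext i j
  have hder := HasFDerivAt.fun_sum (u := Finset.univ) fun r _ =>
    ((hasFDerivAt_prod_rpow_s4 (v r) hc).const_mul (κ r)).mul_const (y' r i - y r i)
  rw [mul_diagonal, Matrix.mul_apply, Finset.sum_mul]
  simp only [jac, plf, of_apply, hder.fderiv, _root_.sum_apply, _root_.smul_apply,
    ContinuousLinearMap.proj_apply, Pi.single_apply, smul_eq_mul, mul_ite, mul_one, mul_zero,
    Finset.sum_ite_eq', Finset.mem_univ, if_true, stoich, mul_diagonal, Zmat]
  refine Finset.sum_congr rfl fun r _ => ?_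
  ring

end Jacobian

section Minors

open Finset Matrix

theorem prod_orderEmbOfFin {ι M : Type*} [LinearOrder ι] [CommMonoid M] {s : ℕ} (J : Finset ι)
    (h : J.card = s) (f : ι → M) : ∏ b, f (J.orderEmbOfFin h b) = ∏ j ∈ J, f j := by
  rw [← prod_image fun a _ b _ hab => (J.orderEmbOfFin h).injective hab,
    image_orderEmbOfFin_univ]

variable {R : Type*} [CommRing R] {ι κ : Type*} [Fintype ι] [LinearOrder ι] [Fintype κ]
  [LinearOrder κ] {s : ℕ}

theorem det_submatrix_mul_diagonal_mul_mul_diagonal (A : Matrix ι κ R) (D : κ → R)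
    (Z : Matrix κ ι R) (w : ι → R) (J : Finset ι) (hJ : J.card = s) :
    ((A * diagonal D * Z * diagonal w).submatrix (J.orderEmbOfFin hJ) (J.orderEmbOfFin hJ)).det =
      ∑ C ∈ powersetCard s univ,
        if hC : C.card = s then
          (∏ l ∈ C, D l) * (A.submatrix (J.orderEmbOfFin hJ) (C.orderEmbOfFin hC)).det *
            (Z.submatrix (C.orderEmbOfFin hC) (J.orderEmbOfFin hJ)).det * ∏ j ∈ J, w j
        else 0 := by
  set e := J.orderEmbOfFin hJ
  have h_split : (A * diagonal D * Z * diagonal w).submatrix e e =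
      A.submatrix e id * (diagonal D * Z).submatrix id e * diagonal fun b => w (e b) := by
    ext a b
    rw [submatrix_apply, mul_diagonal, mul_diagonal, Matrix.mul_assoc A]
    rfl
  rw [h_split, det_mul, det_diagonal, prod_orderEmbOfFin, det_mul_eq_sum_powersetCard, sum_mul]
  refine sum_congr rfl fun C hC => ?_
  have hs : C.card = s := (mem_powersetCard.1 hC).2
  have h_rows : ((diagonal D * Z).submatrix id e).submatrix (C.orderEmbOfFin hs) id =
      diagonal (fun b => D (C.orderEmbOfFin hs b)) * Z.submatrix (C.orderEmbOfFin hs) e := by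
    ext a b
    simp [diagonal_mul]
  rw [dif_pos hs, dif_pos hs, h_rows, det_mul, det_diagonal, prod_orderEmbOfFin]
  simp only [submatrix_submatrix, Function.comp_id, Function.id_comp]
  ring

end Minors

section Polynomial

open MvPolynomial

variable {σ K : Type*} [CommSemiring K] (a : Finset σ → K) (S : Finset (Finset σ))

theorem isHomogeneous_sum_C_mul_prod_X {s : ℕ} (hS : ∀ t ∈ S, t.card = s) :
    (∑ t ∈ S, C (a t) * ∏ l ∈ t, X l).IsHomogeneous s :=
  IsHomogeneous.sum _ _ _ fun t ht => by
    simpa [hS t ht] using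
      (IsHomogeneous.prod t _ (fun _ => 1) fun l _ => isHomogeneous_X K l).C_mul (a t)

theorem degreeOf_sum_C_mul_prod_X_le_one [Nontrivial K] (r : σ) :
    (∑ t ∈ S, C (a t) * ∏ l ∈ t, X l).degreeOf r ≤ 1 := by
  classical
  refine (degreeOf_sum_le _ _ _).trans (Finset.sup_le fun t _ => ?_)
  refine (degreeOf_mul_le _ _ _).trans ?_
  rw [degreeOf_C, zero_add]
  refine (degreeOf_prod_le _ _ _).trans ?_
  simp only [degreeOf_X]
  rw [Finset.sum_ite_eq]
  split_ifs <;> simp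

end Polynomial

section PowerLaw

open Finset Matrix

theorem of_mul_stoich_eq_zero {d : ℕ} {ω : Fin d → Fin n → ℝ} {y y' : Fin m → Fin n → ℝ}
    (hω : ∀ i, ω i ∈ orthComp (stoichSpan y y')) : of ω * stoich y y' = 0 := by
  ext i r
  simpa [Matrix.mul_apply, stoich] using hω i _ (Submodule.subset_span ⟨r, rfl⟩)

theorem IsReducedBasis.submatrix_castAdd_eq_one {d s : ℕ} {F : Submodule ℝ (Fin (d + s) → ℝ)}
    {ω : Fin d → Fin (d + s) → ℝ} (hω : IsReducedBasis d F ω) :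
    (of ω).submatrix id (Fin.castAdd s) = 1 := by
  ext i j
  by_cases hij : i = j
  · subst hij
    simp [hω.2.2.2.1 i (Fin.castAdd s i) rfl]
  · simp [one_apply_ne hij, hω.2.2.2.2 i (Fin.castAdd s j) j.2 fun h => hij (Fin.ext h).symm]

theorem prod_rate_mul_prod_inv {c : Fin n → ℝ} (hc : ∀ i, 0 < c i) (κ : Fin m → ℝ)
    (v : Fin m → Fin n → ℝ) (C : Finset (Fin m)) (J : Finset (Fin n)) :
    (∏ l ∈ C, κ l * ∏ i, c i ^ v l i) * ∏ j ∈ J, (c j)⁻¹ =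
      (∏ l ∈ C, κ l) * ((∏ i, c i ^ (-1 + ∑ l ∈ C, v l i)) * ∏ j ∈ Jᶜ, c j) := by
  have h_rates : ∏ l ∈ C, ∏ i, c i ^ v l i = ∏ i, c i ^ ∑ l ∈ C, v l i := by
    rw [prod_comm]
    exact prod_congr rfl fun i _ => (Real.rpow_sum_of_pos (hc i) _ _).symm
  have h_inv : ∏ j ∈ J, (c j)⁻¹ = (∏ i, (c i)⁻¹) * ∏ j ∈ Jᶜ, c j := by
    rw [← prod_mul_prod_compl J fun i => (c i)⁻¹, mul_assoc, ← prod_mul_distrib]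
    simp [inv_mul_cancel₀ (hc _).ne']
  have h_pow : ∏ i, c i ^ (-1 + ∑ l ∈ C, v l i) =
      (∏ i, (c i)⁻¹) * ∏ i, c i ^ ∑ l ∈ C, v l i := by
    rw [← prod_mul_distrib]
    exact prod_congr rfl fun i _ => by rw [Real.rpow_add (hc i), Real.rpow_neg_one]
  rw [prod_mul_distrib, h_rates, h_inv, h_pow]
  ring

def jacDetCoeff (y y' : Fin m → Fin n → ℝ) (v : Fin m → Fin n → ℝ) (s : ℕ) (c : Fin n → ℝ)
    (C : Finset (Fin m)) : ℝ :=
  (∏ i, c i ^ (-1 + ∑ l ∈ C, v l i)) *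
    ∑ J ∈ powersetCard s univ,
      (if h : J.card = s ∧ C.card = s then
          subDetA y y' s J C h.1 h.2 * subDetZ v s C J h.2 h.1
        else 0) * ∏ j ∈ Jᶜ, c j

theorem det_jac_tildeF_plf {d s : ℕ} {y y' : Fin m → Fin (d + s) → ℝ}
    {ω : Fin d → Fin (d + s) → ℝ} (hω : IsReducedBasis d (stoichSpan y y') ω)
    (κ : Fin m → ℝ) (v : Fin m → Fin (d + s) → ℝ) {c : Fin (d + s) → ℝ} (hc : ∀ i, 0 < c i) :
    (jac (tildeF d ω (plf y y' κ v)) c).det =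
      ∑ C ∈ powersetCard s univ, (∏ l ∈ C, κ l) * jacDetCoeff y y' v s c C := by
  have h_ker : of ω * (stoich y y' * diagonal (fun r => κ r * ∏ j, c j ^ v r j) * Zmat v *
      diagonal fun j => (c j)⁻¹) = 0 := by
    simp only [← Matrix.mul_assoc, of_mul_stoich_eq_zero hω.1, Matrix.zero_mul]
  have h_minor : ∀ J ∈ powersetCard s univ,
      (if h : J.card = s then
        ((stoich y y' * diagonal (fun r => κ r * ∏ j, c j ^ v r j) * Zmat v *
          diagonal fun j => (c j)⁻¹).submatrix (J.orderEmbOfFin h) (J.orderEmbOfFin h)).det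
       else 0) = ∑ C ∈ powersetCard s univ,
        if hJC : J.card = s ∧ C.card = s then
          subDetA y y' s J C hJC.1 hJC.2 * subDetZ v s C J hJC.2 hJC.1 *
            ((∏ l ∈ C, κ l * ∏ i, c i ^ v l i) * ∏ j ∈ J, (c j)⁻¹)
        else 0 := by
    intro J hJ
    have hJs : J.card = s := (mem_powersetCard.1 hJ).2
    rw [dif_pos hJs, det_submatrix_mul_diagonal_mul_mul_diagonal]
    refine sum_congr rfl fun C hC => ?_
    have hCs : C.card = s := (mem_powersetCard.1 hC).2
    rw [dif_pos hCs, dif_pos ⟨hJs, hCs⟩]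
    simp only [subDetA, subDetZ, coe_orderIsoOfFin_apply]
    ring
  rw [jac_tildeF, jac_plf y y' κ v hc,
    det_tildeMat_eq_sum_det_principal_submatrix hω.submatrix_castAdd_eq_one h_ker,
    sum_congr rfl h_minor, sum_comm]
  refine sum_congr rfl fun C _ => ?_
  simp only [jacDetCoeff, mul_sum]
  refine sum_congr rfl fun J _ => ?_
  split_ifs
  · rw [prod_rate_mul_prod_inv hc]
    ring
  · simp

end PowerLaw

/-- Proposition `coefs2`. -/
theorem stmt4 {n m s : ℕ} (d : ℕ) (hd : d = n - s)
    (y y' : Fin m → Fin n → ℝ)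
    (hs : Module.finrank ℝ (stoichSpan y y') = s)
    (ω : Fin d → Fin n → ℝ)
    (hω : IsReducedBasis d (stoichSpan y y') ω)
    (v : Fin m → Fin n → ℝ)
    (c : Fin n → ℝ) (hc : ∀ i, 0 < c i) :
    (∀ κ : Fin m → ℝ, (∀ r, 0 < κ r) →
      (jac (tildeF d ω (plf y y' κ v)) c).det =
        ∑ C ∈ Finset.powersetCard s (Finset.univ : Finset (Fin m)),
          (∏ l ∈ C, κ l) *
            ((∏ i, c i ^ (-1 + ∑ l ∈ C, v l i)) *
              ∑ J ∈ Finset.powersetCard s (Finset.univ : Finset (Fin n)),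
                (if h : J.card = s ∧ C.card = s then
                    subDetA y y' s J C h.1 h.2 * subDetZ v s C J h.2 h.1
                  else 0) * ∏ j ∈ Jᶜ, c j)) ∧
    (∃ P : MvPolynomial (Fin m) ℝ, P.IsHomogeneous s ∧ (∀ r, P.degreeOf r ≤ 1) ∧
      ∀ κ : Fin m → ℝ, (∀ r, 0 < κ r) →
        (jac (tildeF d ω (plf y y' κ v)) c).det = MvPolynomial.eval κ P) := by
  have hsn : s ≤ n := by
    simpa [hs] using Submodule.finrank_le (stoichSpan y y')
  obtain rfl : n = d + s := by omega
  refine ⟨fun κ _ => det_jac_tildeF_plf hω κ v hc, ?_⟩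
  refine ⟨∑ C ∈ Finset.powersetCard s Finset.univ,
      MvPolynomial.C (jacDetCoeff y y' v s c C) * ∏ l ∈ C, MvPolynomial.X l,
    isHomogeneous_sum_C_mul_prod_X _ _ fun C hC => (Finset.mem_powersetCard.1 hC).2,
    degreeOf_sum_C_mul_prod_X_le_one _ _, fun κ _ => ?_⟩
  rw [det_jac_tildeF_plf hω κ v hc]
  simp [mul_comm]

end CRN
end
end
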